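/- The GEL-to-CIEL translation q reflects satisfiability: given a CIEL model (M, x) of q(φ) with agent atom valuations V_Ag(p_a), the GEL model over the same worlds with indistinguishability relations ∼'_a := ∼_{V_Ag(p_a)} (reflexive-transitive closure of the union of ∼_b over b ∈ V_Ag(p_a)) satisfies φ at x. -/

import Mathlib

/-! `q φ` holds in the CIEL model exactly where `φ` holds in the derived GEL model, by
induction on `φ`. The only real case is `C_G`: the step relation of `C_{⋁_{a∈G} p_a}` is
`⋃_{a∈G} ⋃_{b∈V(p_a)} ∼_b`, and inserting the closures `∼'_a` between the two unions does not
change its reflexive-transitive closure. -/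

/-- Agent formulae: falsum, an atom `p_a` per agent name `a`, and disjunction. -/
inductive AgF (Ag : Type) : Type
  | bot
  | atom (a : Ag)
  | or (ψ χ : AgF Ag)

/-- GEL formulae over agent set `Ag` and world atoms `At`. -/
inductive GF (Ag At : Type) : Type
  | bot
  | atom (p : At)
  | not (φ : GF Ag At)
  | and (φ χ : GF Ag At)
  | C (G : Finset Ag) (φ : GF Ag At)

/-- CIEL formulae whose agent formulae come from `AgF Ag`. -/
inductive CF (Ag At : Type) : Type
  | bot
  | atom (p : At)
  | not (φ : CF Ag At)
  | and (φ χ : CF Ag At)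
  | C (ψ : AgF Ag) (φ : CF Ag At)

/-- The disjunction `⋁_{a ∈ l} p_a`. -/
def bigOr {Ag : Type} (l : List Ag) : AgF Ag :=
  l.foldr (fun a ψ => .or (.atom a) ψ) .bot

/-- The translation `q`: commutes with Boolean connectives and maps
`C_G φ` to `C_{⋁_{a∈G} p_a} q(φ)`. -/
noncomputable def q {Ag At : Type} : GF Ag At → CF Ag At
  | .bot => .bot
  | .atom p => .atom p
  | .not φ => .not (q φ)
  | .and φ χ => .and (q φ) (q χ)
  | .C G φ => .C (bigOr G.toList) (q (φ))

/-- Extension of an agent formula, given a valuation `V` of the agent atoms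
over a set `Ag'` of agents. -/
def extA {Ag Ag' : Type} (V : Ag → Set Ag') : AgF Ag → Set Ag'
  | .bot => ∅
  | .atom a => V a
  | .or ψ χ => extA V ψ ∪ extA V χ

/-- GEL satisfaction: `x ⊨ C_G φ` iff every `y` with `x ∼_G y` satisfies `φ`,
where `∼_G = (⋃_{a∈G} ∼_a)*`. -/
def satG {X Ag At : Type} (sim : Ag → X → X → Prop) (val : At → Set X) :
    X → GF Ag At → Prop
  | _, .bot => False
  | x, .atom p => x ∈ val p
  | x, .not φ => ¬ satG sim val x φ
  | x, .and φ χ => satG sim val x φ ∧ satG sim val x χ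
  | x, .C G φ =>
      ∀ y, Relation.ReflTransGen (fun u v => ∃ a ∈ G, sim a u v) x y →
        satG sim val y φ

/-- CIEL satisfaction over a model with agents `Ag'`, agent-atom valuation `V`,
and per-agent relations `sim`. -/
def satC {X Ag Ag' At : Type} (V : Ag → Set Ag') (sim : Ag' → X → X → Prop)
    (val : At → Set X) : X → CF Ag At → Prop
  | _, .bot => False
  | x, .atom p => x ∈ val p
  | x, .not φ => ¬ satC V sim val x φ
  | x, .and φ χ => satC V sim val x φ ∧ satC V sim val x χ
  | x, .C ψ φ =>
      ∀ y, Relation.ReflTransGen (fun u v => ∃ b ∈ extA V ψ, sim b u v) x y →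
        satC V sim val y φ

open Relation

theorem Relation.reflTransGen_eq_of_le_of_le_reflTransGen {α : Type*} {r s : α → α → Prop}
    (hrs : r ≤ s) (hsr : s ≤ ReflTransGen r) : ReflTransGen s = ReflTransGen r :=
  le_antisymm (reflTransGen_closed hsr) (ReflTransGen.mono hrs)

theorem extA_bigOr {Ag Ag' : Type} (V : Ag → Set Ag') (l : List Ag) :
    extA V (bigOr l) = ⋃ a ∈ l, V a := by
  induction l with
  | nil => simp [bigOr, extA]
  | cons a l ih => simpa [bigOr, extA] using congrArg (V a ∪ ·) ih

theorem reflTransGen_extA_bigOr {X Ag Ag' : Type} (V : Ag → Set Ag')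
    (sim : Ag' → X → X → Prop) (G : Finset Ag) :
    ReflTransGen (fun u v => ∃ b ∈ extA V (bigOr G.toList), sim b u v) =
      ReflTransGen (fun u v => ∃ a ∈ G, ReflTransGen (fun u v => ∃ b ∈ V a, sim b u v) u v) := by
  have hstep : (fun u v => ∃ b ∈ extA V (bigOr G.toList), sim b u v) =
      fun u v => ∃ a ∈ G, ∃ b ∈ V a, sim b u v := by
    ext u v
    simp only [extA_bigOr, Set.mem_iUnion, Finset.mem_toList, exists_prop]
    grind
  rw [hstep]
  refine (reflTransGen_eq_of_le_of_le_reflTransGen ?_ ?_).symm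
  · rintro u v ⟨a, ha, hab⟩
    exact ⟨a, ha, .single hab⟩
  · rintro u v ⟨a, ha, hab⟩
    exact ReflTransGen.mono (fun u v hb => ⟨a, ha, hb⟩) _ _ hab

theorem satC_q_iff {X Ag Ag' At : Type} (V : Ag → Set Ag') (sim : Ag' → X → X → Prop)
    (val : At → Set X) (φ : GF Ag At) (x : X) :
    satC V sim val x (q φ) ↔
      satG (fun a => ReflTransGen (fun u v => ∃ b ∈ V a, sim b u v)) val x φ := by
  induction φ generalizing x with
  | bot | atom p => simp [q, satC, satG]
  | not φ ih => simp [q, satC, satG, ih]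
  | and φ χ ihφ ihχ => simp [q, satC, satG, ihφ, ihχ]
  | C G φ ih => simp only [q, satC, satG, reflTransGen_extA_bigOr, ih]

theorem q_reflects_sat_general {X Ag Ag' At : Type} (V : Ag → Set Ag')
    (sim : Ag' → X → X → Prop)
    (val : At → Set X) (φ : GF Ag At) (x : X)
    (h : satC V sim val x (q φ)) :
    satG (fun a => Relation.ReflTransGen (fun u v => ∃ b ∈ V a, sim b u v))
      val x φ :=
  (satC_q_iff V sim val φ x).1 h

/-- The translation `q` reflects satisfaction: from a CIEL model of `q(φ)`
at `x`, the GEL model over the same worlds with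
`∼'_a := (⋃_{b ∈ V(p_a)} ∼_b)*` satisfies `φ` at `x`. -/
theorem q_reflects_sat {X Ag Ag' At : Type} (V : Ag → Set Ag')
    (sim : Ag' → X → X → Prop) (hsim : ∀ b, Equivalence (sim b))
    (val : At → Set X) (φ : GF Ag At) (x : X)
    (h : satC V sim val x (q φ)) :
    satG (fun a => Relation.ReflTransGen (fun u v => ∃ b ∈ V a, sim b u v))
      val x φ :=
  q_reflects_sat_general V sim val φ x h
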